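/- arXiv:2404.06866 — 3 statements merged into one kernel-verified Lean document; each statement's English description precedes it below -/
import Mathlib

section
/- Let β > 0. Define F: ℝ → ℝ by F(t) = arctan(β tan t) + kπ for t ∈ (-π/2 + kπ, π/2 + kπ), and F(π/2 + kπ) = π/2 + kπ, for each integer k. Then F is continuous and strictly monotone increasing on ℝ. -/
open Real

theorem extension_continuous_strictMono (β : ℝ) (hβ : 0 < β) (F : ℝ → ℝ)
    (hF : ∀ k : ℤ, ∀ t ∈ Set.Ioo (-(Real.pi / 2) + k * Real.pi) (Real.pi / 2 + k * Real.pi),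
        F t = Real.arctan (β * Real.tan t) + k * Real.pi)
    (hF' : ∀ k : ℤ, F (Real.pi / 2 + k * Real.pi) = Real.pi / 2 + k * Real.pi) :
    Continuous F ∧ StrictMono F := by
  have hπ : (0:ℝ) < π := Real.pi_pos
  -- F maps each open branch into itself
  have hmem : ∀ k : ℤ, ∀ t ∈ Set.Ioo (-(π / 2) + k * π) (π / 2 + k * π),
      F t ∈ Set.Ioo (-(π / 2) + k * π) (π / 2 + k * π) := by
    intro k t ht
    rw [hF k t ht]
    exact ⟨by linarith [Real.neg_pi_div_two_lt_arctan (β * Real.tan t)],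
      by linarith [Real.arctan_lt_pi_div_two (β * Real.tan t)]⟩
  -- every real lies in some half-open branch
  have hcover : ∀ t : ℝ, ∃ k : ℤ, t ∈ Set.Ioc (-(π / 2) + k * π) (π / 2 + k * π) := by
    intro t
    refine ⟨⌈t / π - 1 / 2⌉, ?_, ?_⟩
    · have h1 : (⌈t / π - 1 / 2⌉ : ℝ) < t / π - 1 / 2 + 1 := Int.ceil_lt_add_one _
      have h2 : (⌈t / π - 1 / 2⌉ : ℝ) - 1 / 2 < t / π := by linarith
      have := (lt_div_iff₀ hπ).mp h2
      linarith
    · have h1 : t / π - 1 / 2 ≤ (⌈t / π - 1 / 2⌉ : ℝ) := Int.le_ceil _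
      have h2 : t / π ≤ (⌈t / π - 1 / 2⌉ : ℝ) + 1 / 2 := by linarith
      have := (div_le_iff₀ hπ).mp h2
      linarith
  -- tan on a shifted branch
  have htan : ∀ (k : ℤ) (t : ℝ), Real.tan t = Real.tan (t - k * π) := fun k t =>
    (Real.tan_periodic.sub_int_mul_eq k).symm
  -- strict monotonicity
  have hmono : StrictMono F := by
    intro s t hst
    obtain ⟨j, hsj⟩ := hcover s
    obtain ⟨k, htk⟩ := hcover t
    have hjk : (j : ℝ) ≤ k := by
      by_contra h
      push_neg at h
      have : (k : ℝ) + 1 ≤ j := by exact_mod_cast h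
      nlinarith [hsj.1, htk.2]
    -- lower bound for F t
    have hFt : -(π / 2) + k * π < F t := by
      rcases eq_or_lt_of_le htk.2 with h | h
      · rw [h, hF' k]; linarith
      · exact (hmem k t ⟨htk.1, h⟩).1
    by_cases hs : s = π / 2 + j * π
    · -- s is a right endpoint; then j < k
      have hFs : F s = π / 2 + j * π := by rw [hs]; exact hF' j
      have hjk' : j < k := by
        by_contra h
        push_neg at h
        have : j = k := le_antisymm (by exact_mod_cast hjk) h
        rw [this] at hs
        exact absurd htk.2 (by rw [← hs]; exact not_le.mpr hst)
      have : (j : ℝ) + 1 ≤ k := by exact_mod_cast hjk'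
      rw [hFs]
      nlinarith
    · have hsIoo : s ∈ Set.Ioo (-(π / 2) + j * π) (π / 2 + j * π) :=
        ⟨hsj.1, lt_of_le_of_ne hsj.2 hs⟩
      have hFs : F s < π / 2 + j * π := (hmem j s hsIoo).2
      by_cases hjk2 : j = k
      · subst hjk2
        rcases eq_or_lt_of_le htk.2 with h | h
        · rw [h, hF' j]; exact hFs
        · have htIoo : t ∈ Set.Ioo (-(π / 2) + j * π) (π / 2 + j * π) := ⟨htk.1, h⟩
          rw [hF j s hsIoo, hF j t htIoo]
          have hts : Real.tan s < Real.tan t := by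
            rw [htan j s, htan j t]
            apply Real.strictMonoOn_tan
            · constructor <;> [linarith [hsIoo.1]; linarith [hsIoo.2]]
            · constructor <;> [linarith [htIoo.1]; linarith [htIoo.2]]
            · linarith
          have := Real.arctan_strictMono (mul_lt_mul_of_pos_left hts hβ)
          linarith
      · have hjk' : j < k := lt_of_le_of_ne (by exact_mod_cast hjk) hjk2
        have : (j : ℝ) + 1 ≤ k := by exact_mod_cast hjk'
        nlinarith
  -- surjectivity
  have hsurj : Function.Surjective F := by
    intro y
    by_cases hy : ∃ k : ℤ, y = π / 2 + k * π
    · obtain ⟨k, rfl⟩ := hy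
      exact ⟨π / 2 + k * π, hF' k⟩
    · push_neg at hy
      set k : ℤ := ⌊y / π + 1 / 2⌋ with hk
      have h1 : (k : ℝ) ≤ y / π + 1 / 2 := Int.floor_le _
      have h2 : y / π + 1 / 2 < (k : ℝ) + 1 := Int.lt_floor_add_one _
      have hub : y < π / 2 + k * π := by
        have := (div_lt_iff₀ hπ).mp (show y / π < (k : ℝ) + 1 / 2 by linarith)
        linarith
      have hlb : -(π / 2) + k * π < y := by
        have hle : (k : ℝ) * π - π / 2 ≤ y := by
          have := (le_div_iff₀ hπ).mp (show (k : ℝ) - 1 / 2 ≤ y / π by linarith)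
          linarith
        rcases eq_or_lt_of_le hle with h | h
        · exfalso
          apply hy (k - 1)
          push_cast
          linarith
        · linarith
      set v : ℝ := Real.tan (y - k * π) with hv
      set t : ℝ := Real.arctan (v / β) + k * π with ht
      have htIoo : t ∈ Set.Ioo (-(π / 2) + k * π) (π / 2 + k * π) := by
        constructor
        · linarith [Real.neg_pi_div_two_lt_arctan (v / β)]
        · linarith [Real.arctan_lt_pi_div_two (v / β)]
      refine ⟨t, ?_⟩
      rw [hF k t htIoo]
      have htant : Real.tan t = v / β := by
        rw [htan k t, ht]
        simp [Real.tan_arctan]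
      rw [htant, mul_div_cancel₀ _ hβ.ne', hv,
        Real.arctan_tan (by linarith) (by linarith)]
      ring
  exact ⟨hmono.monotone.continuous_of_surjective hsurj, hmono⟩
end

section
/- Let α₂ = (√2 - 1)/(√2 + 1) and define x₀'(t) = -2√α₂ cos t / ((1-α₂)cos t + (1+α₂)). Then for any t₁ < t₂, ∫_{t₁}^{t₂} x₀'(t) dt with t₂ = t₁ + 2π equals 2(√2 - 1)π. -/
/-!
Since `(√2 - 1) / (√2 + 1) = (√2 - 1)²`, the integrand is `-cos t / (cos t + √2)
= √2 / (√2 + cos t) - 1`, and the classical period integral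
`∫ dt / (a + cos t) = 2π / √(a² - 1)` for `a > 1` gives `2π (√2 - 1)`.
-/

open Real

lemma hasDerivAt_arctan_sin_div_cos_add {c : ℝ} (hc : 1 < c) (t : ℝ) :
    HasDerivAt (fun u => arctan (sin u / (cos u + c)))
      ((1 + c * cos t) / (1 + c ^ 2 + 2 * c * cos t)) t := by
  have hden : cos t + c ≠ 0 := by linarith [neg_one_le_cos t]
  refine (((hasDerivAt_sin t).div ((hasDerivAt_cos t).add_const c) hden).arctan).congr_deriv ?_
  have hpos : 0 < 1 + c ^ 2 + 2 * c * cos t := by nlinarith [neg_one_le_cos t]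
  have hne : (cos t + c) ^ 2 + sin t ^ 2 ≠ 0 := by positivity
  simp only [Pi.div_apply]
  field_simp
  rw [eq_div_iff (by linarith)]
  linear_combination (c ^ 2 + c * cos t) * sin_sq_add_cos_sq t

/-- `c = a + √(a² - 1)` solves `c² - 2ac + 1 = 0`, which makes the derivative of
`arctan (sin u / (cos u + c))` affine in `1 / (a + cos u)`; unlike the half-angle
substitution, this antiderivative has no jumps. -/
lemma hasDerivAt_inv_add_cos {a : ℝ} (ha : 1 < a) (t : ℝ) :
    HasDerivAt
      (fun u => (u - 2 * arctan (sin u / (cos u + (a + √(a ^ 2 - 1))))) / √(a ^ 2 - 1))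
      (a + cos t)⁻¹ t := by
  set r := √(a ^ 2 - 1)
  have hr0 : 0 < r := sqrt_pos.2 (by nlinarith)
  have hr2 : r ^ 2 = a ^ 2 - 1 := sq_sqrt (by nlinarith)
  have hc : 1 < a + r := by linarith
  refine (((hasDerivAt_id' t).sub
    ((hasDerivAt_arctan_sin_div_cos_add hc t).const_mul 2)).div_const r).congr_deriv ?_
  have h1 : 0 < a + cos t := by linarith [neg_one_le_cos t]
  have h2 : 0 < 1 + (a + r) ^ 2 + 2 * (a + r) * cos t := by nlinarith [neg_one_le_cos t]
  field_simp
  linear_combination (-(a + cos t + r)) * hr2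

lemma continuous_inv_add_cos {a : ℝ} (ha : 1 < a) : Continuous fun t => (a + cos t)⁻¹ :=
  Continuous.inv₀ (by fun_prop) fun t => by linarith [neg_one_le_cos t]

lemma integral_inv_add_cos_period {a : ℝ} (ha : 1 < a) (t₀ : ℝ) :
    ∫ t in t₀..t₀ + 2 * π, (a + cos t)⁻¹ = 2 * π / √(a ^ 2 - 1) := by
  rw [intervalIntegral.integral_eq_sub_of_hasDerivAt (fun t _ => hasDerivAt_inv_add_cos ha t)
    ((continuous_inv_add_cos ha).intervalIntegrable _ _)]
  simp only [sin_add_two_pi, cos_add_two_pi]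
  ring

lemma integral_neg_cos_div_cos_add_period {a : ℝ} (ha : 1 < a) (t₀ : ℝ) :
    ∫ t in t₀..t₀ + 2 * π, -cos t / (cos t + a) = 2 * π * (a / √(a ^ 2 - 1) - 1) := by
  have hsplit : ∀ t, -cos t / (cos t + a) = a * (a + cos t)⁻¹ - 1 := fun t => by
    have : a + cos t ≠ 0 := by linarith [neg_one_le_cos t]
    rw [add_comm (cos t)]
    field_simp
    ring
  simp only [hsplit]
  rw [intervalIntegral.integral_sub
      (((continuous_inv_add_cos ha).intervalIntegrable _ _).const_mul a) intervalIntegrable_const,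
    intervalIntegral.integral_const_mul, integral_inv_add_cos_period ha]
  simp only [intervalIntegral.integral_const, add_sub_cancel_left, smul_eq_mul, mul_one]
  ring

lemma sqrt_two_sub_one_div_add_one : (√2 - 1) / (√2 + 1) = (√2 - 1) ^ 2 := by
  have h2 : √2 ^ 2 = 2 := sq_sqrt (by norm_num)
  rw [div_eq_iff (by positivity)]
  linear_combination (1 - √2) * h2

lemma neg_two_mul_sqrt_div_eq_neg_div_add_sqrt_two (x : ℝ) :
    -2 * √((√2 - 1) / (√2 + 1)) * x /
        ((1 - (√2 - 1) / (√2 + 1)) * x + (1 + (√2 - 1) / (√2 + 1))) =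
      -x / (x + √2) := by
  have h2 : √2 ^ 2 = 2 := sq_sqrt (by norm_num)
  have hpos : 0 < √2 - 1 := by nlinarith [sqrt_nonneg 2]
  have hden : (1 - (√2 - 1) ^ 2) * x + (1 + (√2 - 1) ^ 2) = 2 * (√2 - 1) * (x + √2) := by
    linear_combination (-x - 1) * h2
  rw [sqrt_two_sub_one_div_add_one, sqrt_sq hpos.le, hden, neg_mul, neg_mul, neg_div,
    mul_div_mul_left _ _ (mul_pos two_pos hpos).ne', neg_div]

theorem x0_period_increment (t₁ t₂ : ℝ) (h : t₂ = t₁ + 2 * Real.pi) :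
    ∫ t in t₁..t₂,
        (-2 * Real.sqrt ((Real.sqrt 2 - 1) / (Real.sqrt 2 + 1)) * Real.cos t /
          ((1 - (Real.sqrt 2 - 1) / (Real.sqrt 2 + 1)) * Real.cos t +
            (1 + (Real.sqrt 2 - 1) / (Real.sqrt 2 + 1)))) =
      2 * (Real.sqrt 2 - 1) * Real.pi := by
  have hsqrt : √(√2 ^ 2 - 1) = 1 := by norm_num
  simp only [neg_two_mul_sqrt_div_eq_neg_div_add_sqrt_two]
  rw [h, integral_neg_cos_div_cos_add_period one_lt_sqrt_two t₁, hsqrt, div_one]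
  ring
end

section
/- Let a > b > 0, α = (a-b)/(a+b), and t₀ ∈ ℝ. Define θ(t) on the interval where |√(a²-b²)(t-t₀)/2| < π/2 by tan(θ(t)/2) = -√α tan(√(a²-b²)(t-t₀)/2) with θ(t₀) = 0. Then θ satisfies θ'(t) = b cos θ(t) - a. -/
/-!
With `T = tan (s (t - t₀) / 2)` and `θ = 2 arctan (c T)` one has
`θ' = c s (1 + T²) / (1 + c² T²)` and `cos θ = (1 - c² T²) / (1 + c² T²)`, so
`θ' = b cos θ - a` reduces to the polynomial identity `c s (1 + T²) = (b - a) - (a + b) c² T²`.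
It holds identically in `T` once `c s = b - a` and `c² (a + b) = a - b`, which is exactly what
`c = -√α` and `s = √(a² - b²)` satisfy.
-/

open Real

theorem Real.cos_two_mul_arctan (y : ℝ) : cos (2 * arctan y) = (1 - y ^ 2) / (1 + y ^ 2) := by
  have : 1 + y ^ 2 ≠ 0 := by positivity
  rw [cos_two_mul, cos_sq_arctan]
  field_simp
  ring

theorem Real.hasDerivAt_arctan_mul_tan {c x : ℝ} (hx : cos x ≠ 0) :
    HasDerivAt (fun x => arctan (c * tan x)) (c * (1 + tan x ^ 2) / (1 + (c * tan x) ^ 2)) x := by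
  have hsec : 1 / cos x ^ 2 = 1 + tan x ^ 2 := by rw [← inv_one_add_tan_sq hx, one_div, inv_inv]
  refine ((hasDerivAt_arctan (c * tan x)).comp x ((hasDerivAt_tan hx).const_mul c)).congr_deriv ?_
  rw [hsec]
  ring

theorem hasDerivAt_two_mul_arctan_mul_tan_half {a b c s t₀ t : ℝ} (hcs : c * s = b - a)
    (hc : c ^ 2 * (a + b) = a - b) (ht : cos (s * (t - t₀) / 2) ≠ 0) :
    HasDerivAt (fun t => 2 * arctan (c * tan (s * (t - t₀) / 2)))
      (b * cos (2 * arctan (c * tan (s * (t - t₀) / 2))) - a) t := by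
  have hu : HasDerivAt (fun t => s * (t - t₀) / 2) (s / 2) t := by
    simpa using (((hasDerivAt_id t).sub_const t₀).const_mul s).div_const 2
  refine (((hasDerivAt_arctan_mul_tan ht).comp t hu).const_mul 2).congr_deriv ?_
  set T := tan (s * (t - t₀) / 2)
  have hD : 1 + (c * T) ^ 2 ≠ 0 := by positivity
  rw [cos_two_mul_arctan]
  field_simp
  linear_combination (1 + T ^ 2) * hcs + T ^ 2 * hc

theorem theta_solves_ode (a b t₀ : ℝ) (hb : 0 < b) (hba : b < a) :
    let α : ℝ := (a - b) / (a + b)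
    let θ : ℝ → ℝ := fun t =>
      2 * Real.arctan (-Real.sqrt α * Real.tan (Real.sqrt (a ^ 2 - b ^ 2) * (t - t₀) / 2))
    θ t₀ = 0 ∧
    (∀ t, |Real.sqrt (a ^ 2 - b ^ 2) * (t - t₀) / 2| < Real.pi / 2 →
      Real.tan (θ t / 2) = -Real.sqrt α * Real.tan (Real.sqrt (a ^ 2 - b ^ 2) * (t - t₀) / 2)) ∧
    (∀ t, |Real.sqrt (a ^ 2 - b ^ 2) * (t - t₀) / 2| < Real.pi / 2 →
      HasDerivAt θ (b * Real.cos (θ t) - a) t) := by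
  intro α θ
  have hab : 0 < a + b := by linarith
  have hα : 0 ≤ α := div_nonneg (by linarith) hab.le
  have hαs : α * (a + b) = a - b := div_mul_cancel₀ _ hab.ne'
  have hcs : -√α * √(a ^ 2 - b ^ 2) = b - a := by
    rw [neg_mul, ← sqrt_mul hα, show α * (a ^ 2 - b ^ 2) = (a - b) * (a - b) by
      linear_combination (a - b) * hαs, sqrt_mul_self (by linarith)]
    ring
  refine ⟨by simp [θ], fun t _ => ?_, fun t ht => ?_⟩
  · rw [mul_div_cancel_left₀ _ two_ne_zero, tan_arctan]
  · refine hasDerivAt_two_mul_arctan_mul_tan_half hcs (by rwa [neg_sq, sq_sqrt hα]) ?_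
    exact (cos_pos_of_mem_Ioo (abs_lt.mp ht)).ne'
end
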